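/- Let n be a nonempty finite type, let Q : Matrix n n ℝ, and let π : n → ℝ be a probability vector (π i ≥ 0 for all i and ∑_i π i = 1) satisfying π ⬝ Q = 0 (row-vector–matrix product, i.e., ∑_i π i · Q i j = 0 for every j). Let y : n → ℝ with y i > 0 for all i, let V be the diagonal matrix with diagonal entries y, and set S = ∑_i y i · π i. Then S > 0, and the vector π* defined by π* i = y i · π i / S is a probability vector satisfying π* ⬝ (V⁻¹ * Q) = 0, where V⁻¹ * Q is the matrix with (i,j) entry Q i j / y i. -/

import Mathlib

/-!
Since `V⁻¹` is diagonal, `(y * p) ᵥ* (V⁻¹ * Q) = p ᵥ* Q = 0`, so the size-biased vector `y * p` is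
invariant for `V⁻¹ * Q`; it is positive and not identically zero, so normalizing it gives `π*`.
-/

open Matrix

section SizeBiased

variable {n K : Type*} [Fintype n] [Field K]

def sizeBiased (y p : n → K) : n → K := fun i => y i * p i / ∑ j, y j * p j

theorem sum_sizeBiased {y p : n → K} (h : ∑ j, y j * p j ≠ 0) : ∑ i, sizeBiased y p i = 1 := by
  simp only [sizeBiased, ← Finset.sum_div, div_self h]

theorem vecMul_diagonal_inv_mul [DecidableEq n] {y : n → K} (hy : ∀ i, y i ≠ 0)
    (p : n → K) (Q : Matrix n n K) : (y * p) ᵥ* ((diagonal y)⁻¹ * Q) = p ᵥ* Q := by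
  have hinv : (diagonal y)⁻¹ = diagonal y⁻¹ := by
    refine inv_eq_left_inv ?_
    rw [diagonal_mul_diagonal, ← diagonal_one]
    exact congrArg diagonal (funext fun i => inv_mul_cancel₀ (hy i))
  have hcancel : (y * p) ᵥ* diagonal y⁻¹ = p := by
    ext i
    simp only [vecMul_diagonal, Pi.mul_apply, Pi.inv_apply]
    field_simp [hy i]
  rw [← vecMul_vecMul, hinv, hcancel]

theorem sizeBiased_vecMul_diagonal_inv_mul [DecidableEq n] {y : n → K} (hy : ∀ i, y i ≠ 0)
    (p : n → K) (Q : Matrix n n K) :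
    sizeBiased y p ᵥ* ((diagonal y)⁻¹ * Q) = (∑ j, y j * p j)⁻¹ • (p ᵥ* Q) := by
  have : sizeBiased y p = (∑ j, y j * p j)⁻¹ • (y * p) := by
    ext i
    simp only [sizeBiased, Pi.smul_apply, Pi.mul_apply, smul_eq_mul]
    ring
  rw [this, smul_vecMul, vecMul_diagonal_inv_mul hy]

end SizeBiased

theorem sum_mul_pos_of_sum_eq_one {n : Type*} [Fintype n] {y p : n → ℝ} (hy : ∀ i, 0 < y i)
    (hp : ∀ i, 0 ≤ p i) (hpsum : ∑ i, p i = 1) : 0 < ∑ i, y i * p i := by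
  obtain ⟨i, -, hi⟩ := Finset.exists_ne_zero_of_sum_ne_zero (hpsum ▸ one_ne_zero)
  exact Finset.sum_pos' (fun j _ => mul_nonneg (hy j).le (hp j))
    ⟨i, Finset.mem_univ i, mul_pos (hy i) ((hp i).lt_of_ne' hi)⟩

theorem stmt_4_general {n : Type*} [Fintype n] [DecidableEq n]
    (Q : Matrix n n ℝ) (p : n → ℝ)
    (hpnn : ∀ i, 0 ≤ p i) (hpsum : ∑ i, p i = 1)
    (hpQ : ∀ j, ∑ i, p i * Q i j = 0)
    (y : n → ℝ) (hy : ∀ i, 0 < y i)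
    (V : Matrix n n ℝ) (hV : V = Matrix.diagonal y)
    (S : ℝ) (hS : S = ∑ i, y i * p i)
    (pstar : n → ℝ) (hpstar : ∀ i, pstar i = y i * p i / S) :
    0 < S ∧ (∀ i, 0 ≤ pstar i) ∧ (∑ i, pstar i = 1) ∧
    (∀ j, ∑ i, pstar i * (V⁻¹ * Q) i j = 0) := by
  have hSpos : 0 < S := hS ▸ sum_mul_pos_of_sum_eq_one hy hpnn hpsum
  have hpstar_eq : pstar = sizeBiased y p := funext fun i => by rw [hpstar, hS, sizeBiased]
  have hpQ_vecMul : p ᵥ* Q = 0 := funext hpQ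
  subst hV hpstar_eq
  refine ⟨hSpos, fun i => ?_, sum_sizeBiased (hS ▸ hSpos.ne'), fun j => ?_⟩
  · rw [hpstar i]
    exact div_nonneg (mul_nonneg (hy i).le (hpnn i)) hSpos.le
  · have := congrFun (sizeBiased_vecMul_diagonal_inv_mul (fun i => (hy i).ne') p Q) j
    rwa [hpQ_vecMul, smul_zero] at this

/-- If `p` is a probability vector with `p ⬝ Q = 0` and `V = diagonal y` with
`y i > 0`, then `S = ∑ i, y i * p i > 0` and `pstar i = y i * p i / S` is a
probability vector with `pstar ⬝ (V⁻¹ * Q) = 0`. -/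
theorem stmt_4 {n : Type*} [Fintype n] [DecidableEq n] [Nonempty n]
    (Q : Matrix n n ℝ) (p : n → ℝ)
    (hpnn : ∀ i, 0 ≤ p i) (hpsum : ∑ i, p i = 1)
    (hpQ : ∀ j, ∑ i, p i * Q i j = 0)
    (y : n → ℝ) (hy : ∀ i, 0 < y i)
    (V : Matrix n n ℝ) (hV : V = Matrix.diagonal y)
    (S : ℝ) (hS : S = ∑ i, y i * p i)
    (pstar : n → ℝ) (hpstar : ∀ i, pstar i = y i * p i / S) :
    0 < S ∧ (∀ i, 0 ≤ pstar i) ∧ (∑ i, pstar i = 1) ∧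
    (∀ j, ∑ i, pstar i * (V⁻¹ * Q) i j = 0) :=
  stmt_4_general Q p hpnn hpsum hpQ y hy V hV S hS pstar hpstar
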